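/- arXiv:1407.2691 — 2 statements merged into one kernel-verified Lean document; each statement's English description precedes it below -/
import Mathlib

section
/- Suppose M = ⊕_{i=1}^n ⊕_{j=1}^{t_i} Λe_i/C_{ij} with submodules C_{ij} ⊆ Je_i such that, for each fixed i, the C_{ij} are linearly ordered under inclusion, and let P = ⊕_{i=1}^n (Λe_i)^{t_i} (a projective cover of M). Then dim_K Hom_Λ(P, JM) = dim_K Hom_Λ(M, JM) if and only if f(C_{ij}) ⊆ C_{kl} for all pairs of indices (i,j) and (k,l), not necessarily distinct, and all Λ-homomorphisms f : Λe_i → Je_k. -/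
/-! Since `P → M` is surjective, precomposition embeds `Hom(M, JM)` into `Hom(P, JM)`, so the
two dimensions agree exactly when every map `P → JM` factors through `M`, i.e. kills `⊕ C_ij`.
Componentwise, a map `h : Λe_i → J(Λe_k/C_kl)` is determined by `h e_i`, which lifts to some
`u ∈ Je_k`; thus `h x = xu mod C_kl`, and `h` kills `C_ij` exactly when right multiplication by
`u`, a map `Λe_i → Je_k`, sends `C_ij` into `C_kl`. -/

open Submodule

/-- The submodule `J•M` of `M`, where `J` is the Jacobson radical of `Λ`. -/
def radsub (Λ : Type) [Ring Λ] (M : Type) [AddCommGroup M] [Module Λ M] :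
    Submodule Λ M :=
  Submodule.span Λ {x : M | ∃ a ∈ (⊥ : Ideal Λ).jacobson, ∃ m : M, x = a • m}

/-- Riedtmann–Zwara: `N` is a degeneration of `M` if there is a short exact sequence
`0 → Z → Z ⊕ M → N → 0` for some finite `Λ`-module `Z`. -/
def IsDegeneration (Λ : Type) [Ring Λ] (M N : Type) [AddCommGroup M] [Module Λ M]
    [AddCommGroup N] [Module Λ N] : Prop :=
  ∃ (Z : Type) (_ : AddCommGroup Z) (_ : Module Λ Z) (_ : Module.Finite Λ Z)
    (f : Z →ₗ[Λ] Z × M) (g : Z × M →ₗ[Λ] N),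
      Function.Injective f ∧ Function.Surjective g ∧
        LinearMap.range f = LinearMap.ker g

/-- A degeneration is top-stable if it has the same top `M/JM`. -/
def IsTopStableDegeneration (Λ : Type) [Ring Λ] (M N : Type) [AddCommGroup M] [Module Λ M]
    [AddCommGroup N] [Module Λ N] : Prop :=
  IsDegeneration Λ M N ∧
    Nonempty ((N ⧸ radsub Λ N) ≃ₗ[Λ] (M ⧸ radsub Λ M))

/-- `M` has no proper top-stable degeneration. -/
def HasNoProperTopStableDegeneration (Λ : Type) [Ring Λ] (M : Type) [AddCommGroup M]
    [Module Λ M] : Prop :=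
  ∀ (N : Type) (_ : AddCommGroup N) (_ : Module Λ N) (_ : Module.Finite Λ N),
    IsTopStableDegeneration Λ M N → Nonempty (N ≃ₗ[Λ] M)

/-- The left ideal `Λx` as a submodule of `Λ`. -/
def Pe (Λ : Type) [Ring Λ] (x : Λ) : Submodule Λ Λ := Submodule.span Λ {x}

/-- The left ideal `Jx` as a submodule of `Λ`. -/
def Je (Λ : Type) [Ring Λ] (x : Λ) : Submodule Λ Λ :=
  Submodule.span Λ {y : Λ | ∃ a ∈ (⊥ : Ideal Λ).jacobson, y = a * x}

/-- The `K`-subspace of `Hom_Λ(P, M)` consisting of the maps with image inside the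
submodule `W` of `M`; used to express `Hom_Λ(P, W)` as a `K`-vector space. -/
def homInto (K : Type) [CommSemiring K] (Λ : Type) [Ring Λ] [Algebra K Λ]
    (P M : Type) [AddCommGroup P] [Module Λ P] [AddCommGroup M] [Module K M] [Module Λ M]
    [IsScalarTower K Λ M] [SMulCommClass Λ K M] (W : Submodule Λ M) :
    Submodule K (P →ₗ[Λ] M) where
  carrier := {f | LinearMap.range f ≤ W}
  zero_mem' := by rintro x ⟨y, rfl⟩; simp
  add_mem' := by
    intro f g hf hg
    rintro x ⟨y, rfl⟩
    exact W.add_mem (hf ⟨y, rfl⟩) (hg ⟨y, rfl⟩)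
  smul_mem' := by
    intro k f hf
    rintro x ⟨y, rfl⟩
    have h1 : (k • f) y = (algebraMap K Λ k) • f y := by
      rw [LinearMap.smul_apply, algebraMap_smul]
    rw [h1]
    exact W.smul_mem _ (hf ⟨y, rfl⟩)

open scoped DirectSum

section Radical

variable {Λ : Type} [Ring Λ] {M N : Type} [AddCommGroup M] [Module Λ M] [AddCommGroup N]
  [Module Λ N]

theorem radsub_eq_jacobson_smul_top : radsub Λ M = (⊥ : Ideal Λ).jacobson • ⊤ := by
  refine le_antisymm (Submodule.span_le.mpr ?_) (Submodule.smul_le.mpr ?_)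
  · rintro _ ⟨a, ha, m, rfl⟩
    exact Submodule.smul_mem_smul ha Submodule.mem_top
  · intro a ha m _
    exact Submodule.subset_span ⟨a, ha, m, rfl⟩

theorem map_radsub_le (f : M →ₗ[Λ] N) : (radsub Λ M).map f ≤ radsub Λ N := by
  rw [radsub_eq_jacobson_smul_top, radsub_eq_jacobson_smul_top, Submodule.map_smul'']
  exact smul_mono_right _ le_top

theorem map_radsub_of_surjective {f : M →ₗ[Λ] N} (hf : Function.Surjective f) :
    (radsub Λ M).map f = radsub Λ N := by
  rw [radsub_eq_jacobson_smul_top, radsub_eq_jacobson_smul_top, Submodule.map_smul'',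
    Submodule.map_top, LinearMap.range_eq_top.mpr hf]

theorem range_comp_le_radsub {P : Type} [AddCommGroup P] [Module Λ P] {h : P →ₗ[Λ] M}
    (hh : LinearMap.range h ≤ radsub Λ M) (f : M →ₗ[Λ] N) :
    LinearMap.range (f ∘ₗ h) ≤ radsub Λ N := by
  rw [LinearMap.range_comp]
  exact (Submodule.map_mono hh).trans (map_radsub_le f)

theorem Je_eq_jacobson_smul_Pe (e : Λ) : Je Λ e = (⊥ : Ideal Λ).jacobson • Pe Λ e := by
  refine le_antisymm (Submodule.span_le.mpr ?_) (Submodule.smul_le.mpr ?_)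
  · rintro _ ⟨a, ha, rfl⟩
    exact Submodule.smul_mem_smul ha (Submodule.mem_span_singleton_self e)
  · intro a ha x hx
    obtain ⟨c, rfl⟩ := Submodule.mem_span_singleton.mp hx
    refine Submodule.subset_span ⟨a * c, Ideal.mul_mem_right c _ ha, ?_⟩
    simp [smul_eq_mul, mul_assoc]

theorem mem_radsub_Pe_iff {e : Λ} (x : Pe Λ e) : x ∈ radsub Λ (Pe Λ e) ↔ (x : Λ) ∈ Je Λ e := by
  rw [radsub_eq_jacobson_smul_top, Submodule.mem_smul_top_iff, Je_eq_jacobson_smul_Pe]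

theorem Je_le_Pe (e : Λ) : Je Λ e ≤ Pe Λ e := by
  rw [Je_eq_jacobson_smul_Pe]
  exact Submodule.smul_le_right

end Radical

section Summand

variable {Λ : Type} [Ring Λ]

instance (e : Λ) : Module.Finite Λ (Pe Λ e) :=
  Module.Finite.span_singleton Λ e

theorem hom_Pe_apply {e : Λ} (he : IsIdempotentElem e) {N : Type} [AddCommGroup N]
    [Module Λ N] (h : Pe Λ e →ₗ[Λ] N) (x : Pe Λ e) :
    h x = (x : Λ) • h ⟨e, Submodule.mem_span_singleton_self e⟩ := by
  obtain ⟨c, hc⟩ := Submodule.mem_span_singleton.mp x.2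
  have hx : (x : Λ) • (⟨e, Submodule.mem_span_singleton_self e⟩ : Pe Λ e) = x := by
    ext
    simp only [SetLike.val_smul, smul_eq_mul, ← hc, mul_assoc, he.eq]
  rw [← map_smul, hx]

theorem range_le_radsub_iff_exists_lift {e e' : Λ} (he : IsIdempotentElem e)
    (D : Submodule Λ (Pe Λ e')) (h : Pe Λ e →ₗ[Λ] Pe Λ e' ⧸ D) :
    LinearMap.range h ≤ radsub Λ (Pe Λ e' ⧸ D) ↔
      ∃ f : Pe Λ e →ₗ[Λ] Je Λ e', h = D.mkQ ∘ₗ Submodule.inclusion (Je_le_Pe e') ∘ₗ f := by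
  rw [← map_radsub_of_surjective D.mkQ_surjective]
  constructor
  · intro hh
    obtain ⟨u, hu, hue⟩ := hh ⟨⟨e, Submodule.mem_span_singleton_self e⟩, rfl⟩
    rw [SetLike.mem_coe, mem_radsub_Pe_iff] at hu
    refine ⟨LinearMap.toSpanSingleton Λ _ ⟨u, hu⟩ ∘ₗ (Pe Λ e).subtype, LinearMap.ext fun x => ?_⟩
    rw [hom_Pe_apply he h x, ← hue, ← map_smul]
    rfl
  · rintro ⟨f, rfl⟩
    rw [LinearMap.range_comp]
    refine Submodule.map_mono ?_
    rintro _ ⟨x, rfl⟩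
    exact (mem_radsub_Pe_iff _).mpr (f x).2

theorem forall_map_le_iff_le_ker_of_range_le_radsub {e e' : Λ} (he : IsIdempotentElem e)
    (C C' : Submodule Λ Λ) :
    (∀ f : Pe Λ e →ₗ[Λ] Je Λ e',
      ((C.comap (Pe Λ e).subtype).map f).map (Je Λ e').subtype ≤ C') ↔
    ∀ h : Pe Λ e →ₗ[Λ] Pe Λ e' ⧸ C'.comap (Pe Λ e').subtype,
      LinearMap.range h ≤ radsub Λ _ → C.comap (Pe Λ e).subtype ≤ LinearMap.ker h := by
  simp_rw [range_le_radsub_iff_exists_lift he]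
  constructor
  · rintro hinv _ ⟨f, rfl⟩ x hx
    simpa [Submodule.Quotient.mk_eq_zero] using hinv f ⟨_, ⟨x, hx, rfl⟩, rfl⟩
  · rintro hker f _ ⟨_, ⟨x, hx, rfl⟩, rfl⟩
    simpa [Submodule.Quotient.mk_eq_zero] using hker _ ⟨f, rfl⟩ hx

end Summand

section HomSpaces

open Module

theorem LinearMap.finrank_eq_iff_surjective_of_injective {K V V₂ : Type} [DivisionRing K]
    [AddCommGroup V] [Module K V] [AddCommGroup V₂] [Module K V₂] [FiniteDimensional K V₂]
    {f : V →ₗ[K] V₂} (hf : Function.Injective f) :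
    finrank K V = finrank K V₂ ↔ Function.Surjective f := by
  have : FiniteDimensional K V := Module.Finite.of_injective f hf
  refine ⟨fun h => (injective_iff_surjective_of_finrank_eq_finrank h).mp hf, fun hs => ?_⟩
  exact (LinearEquiv.ofBijective f ⟨hf, hs⟩).finrank_eq

variable {K Λ P M : Type} [Field K] [Ring Λ] [AddCommGroup P] [Module Λ P] [AddCommGroup M]
  [Module K M] [Module Λ M] [SMulCommClass Λ K M]

theorem finiteDimensional_linearMap [Module.Finite Λ P] [FiniteDimensional K M] :
    FiniteDimensional K (P →ₗ[Λ] M) := by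
  obtain ⟨S, hS⟩ := Module.Finite.fg_top (R := Λ) (M := P)
  let ev : (P →ₗ[Λ] M) →ₗ[K] (S → M) :=
    { toFun := fun f s => f s
      map_add' := fun _ _ => rfl
      map_smul' := fun _ _ => rfl }
  exact Module.Finite.of_injective ev fun f g hfg =>
    LinearMap.ext_on hS fun s hs => congrFun hfg ⟨s, hs⟩

variable [Algebra K Λ] [IsScalarTower K Λ M]

theorem mem_homInto {W : Submodule Λ M} {f : P →ₗ[Λ] M} :
    f ∈ homInto K Λ P M W ↔ LinearMap.range f ≤ W :=
  Iff.rfl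

theorem finrank_homInto_eq_iff_forall_exists_comp_eq [Module.Finite Λ P] [FiniteDimensional K M]
    {π : P →ₗ[Λ] M} (hπ : Function.Surjective π) (W : Submodule Λ M) :
    finrank K (homInto K Λ P M W) = finrank K (homInto K Λ M M W) ↔
      ∀ F : P →ₗ[Λ] M, LinearMap.range F ≤ W → ∃ G : M →ₗ[Λ] M, G ∘ₗ π = F := by
  have := finiteDimensional_linearMap (K := K) (Λ := Λ) (P := P) (M := M)
  have hrange (G : M →ₗ[Λ] M) : LinearMap.range (G ∘ₗ π) = LinearMap.range G :=
    LinearMap.range_comp_of_range_eq_top G (LinearMap.range_eq_top.mpr hπ)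
  let Φ : homInto K Λ M M W →ₗ[K] homInto K Λ P M W :=
    { toFun := fun G => ⟨G.1 ∘ₗ π, mem_homInto.mpr ((hrange G.1).trans_le G.2)⟩
      map_add' := fun _ _ => rfl
      map_smul' := fun _ _ => rfl }
  have hΦ : Function.Injective Φ := fun G₁ G₂ h =>
    Subtype.ext ((LinearMap.cancel_right hπ).mp (congrArg Subtype.val h))
  rw [eq_comm, LinearMap.finrank_eq_iff_surjective_of_injective hΦ]
  constructor
  · intro hΦ' F hF
    obtain ⟨G, hG⟩ := hΦ' ⟨F, hF⟩
    exact ⟨G.1, congrArg Subtype.val hG⟩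
  · rintro hfactor ⟨F, hF⟩
    obtain ⟨G, rfl⟩ := hfactor F hF
    exact ⟨⟨G, (hrange G).symm.trans_le hF⟩, rfl⟩

end HomSpaces

section DirectSum

open DirectSum

variable {Λ ι : Type} [Ring Λ] [DecidableEq ι] {β : ι → Type} [∀ p, AddCommGroup (β p)]
  [∀ p, Module Λ (β p)] (D : ∀ p, Submodule Λ (β p))

theorem exists_comp_lmap_mkQ_eq_iff {N : Type} [AddCommGroup N] [Module Λ N]
    (F : (⨁ p, β p) →ₗ[Λ] N) :
    (∃ G : (⨁ p, β p ⧸ D p) →ₗ[Λ] N, G ∘ₗ lmap (fun p => (D p).mkQ) = F) ↔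
      ∀ p, D p ≤ LinearMap.ker (F ∘ₗ lof Λ ι β p) := by
  constructor
  · rintro ⟨G, rfl⟩ p x hx
    simp [(Submodule.Quotient.mk_eq_zero _).mpr hx]
  · intro hF
    refine ⟨toModule Λ ι N fun p => (D p).liftQ _ (hF p), ?_⟩
    ext p x
    simp

theorem forall_exists_comp_eq_iff_le_ker {P M : Type} [AddCommGroup P] [Module Λ P]
    [AddCommGroup M] [Module Λ M] (eP : P ≃ₗ[Λ] ⨁ p, β p) (eM : M ≃ₗ[Λ] ⨁ p, β p ⧸ D p) :
    (∀ F : P →ₗ[Λ] M, LinearMap.range F ≤ radsub Λ M → ∃ G : M →ₗ[Λ] M,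
        G ∘ₗ eM.symm.toLinearMap ∘ₗ lmap (fun p => (D p).mkQ) ∘ₗ eP.toLinearMap = F) ↔
      ∀ p q (h : β p →ₗ[Λ] β q ⧸ D q), LinearMap.range h ≤ radsub Λ _ →
        D p ≤ LinearMap.ker h := by
  constructor
  · intro hfactor p q h hh x hx
    let F : P →ₗ[Λ] M := (eM.symm.toLinearMap ∘ₗ lof Λ ι _ q) ∘ₗ h ∘ₗ
      (component Λ ι β p ∘ₗ eP.toLinearMap)
    obtain ⟨G, hG⟩ := hfactor F
      (range_comp_le_radsub ((LinearMap.range_comp_le_range _ h).trans hh) _)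
    have hF : F (eP.symm (lof Λ ι β p x)) = 0 := by
      rw [← hG]
      simp [(Submodule.Quotient.mk_eq_zero _).mpr hx]
    simpa [F] using congrArg (fun m => component Λ ι _ q (eM m)) hF
  · intro hker F hF
    have hkill (p : ι) : D p ≤ LinearMap.ker ((F ∘ₗ eP.symm.toLinearMap) ∘ₗ lof Λ ι β p) := by
      intro x hx
      refine eM.injective (DirectSum.ext_component Λ fun q => ?_)
      simpa using hker p q ((component Λ ι _ q ∘ₗ eM.toLinearMap) ∘ₗ F ∘ₗ
        (eP.symm.toLinearMap ∘ₗ lof Λ ι β p))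
        (range_comp_le_radsub ((LinearMap.range_comp_le_range _ F).trans hF) _) hx
    obtain ⟨G, hG⟩ := (exists_comp_lmap_mkQ_eq_iff D _).mpr hkill
    refine ⟨G ∘ₗ eM.toLinearMap, LinearMap.ext fun z => ?_⟩
    simpa using LinearMap.congr_fun hG (eP z)

end DirectSum

theorem hom_dim_eq_iff_invariant_general
    (K : Type) [Field K]
    (Λ : Type) [Ring Λ] [Algebra K Λ]
    (n : ℕ) (e : Fin n → Λ)
    (hIdem : ∀ i, IsIdempotentElem (e i))
    (t : Fin n → ℕ) (C : ∀ i : Fin n, Fin (t i) → Submodule Λ Λ)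
    -- `M = ⊕_{i,j} Λe_i/C_{ij}`
    (M : Type) [AddCommGroup M] [Module K M] [Module Λ M] [IsScalarTower K Λ M]
    [SMulCommClass Λ K M] [FiniteDimensional K M]
    (hM : Nonempty (M ≃ₗ[Λ] ⨁ (p : Σ i : Fin n, Fin (t i)),
      (↥(Pe Λ (e p.1)) ⧸ Submodule.comap (Pe Λ (e p.1)).subtype (C p.1 p.2))))
    -- `P = ⊕_i (Λe_i)^{t_i}`, a projective cover of `M`
    (P : Type) [AddCommGroup P] [Module Λ P]
    (hP : Nonempty (P ≃ₗ[Λ] ⨁ (p : Σ i : Fin n, Fin (t i)), ↥(Pe Λ (e p.1)))) :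
    Module.finrank K ↥(homInto K Λ P M (radsub Λ M)) =
        Module.finrank K ↥(homInto K Λ M M (radsub Λ M)) ↔
      (∀ i j k l, ∀ f : ↥(Pe Λ (e i)) →ₗ[Λ] ↥(Je Λ (e k)),
        Submodule.map (Je Λ (e k)).subtype
          (Submodule.map f (Submodule.comap (Pe Λ (e i)).subtype (C i j))) ≤ C k l) := by
  obtain ⟨eM⟩ := hM
  obtain ⟨eP⟩ := hP
  have : Module.Finite Λ P := Module.Finite.equiv eP.symm
  let D (p : Σ i : Fin n, Fin (t i)) := (C p.1 p.2).comap (Pe Λ (e p.1)).subtype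
  let π : P →ₗ[Λ] M :=
    eM.symm.toLinearMap ∘ₗ DirectSum.lmap (fun p => (D p).mkQ) ∘ₗ eP.toLinearMap
  have hπ : Function.Surjective π := eM.symm.surjective.comp <|
    ((DirectSum.lmap_surjective _).mpr fun p => (D p).mkQ_surjective).comp eP.surjective
  rw [finrank_homInto_eq_iff_forall_exists_comp_eq hπ, forall_exists_comp_eq_iff_le_ker D eP eM]
  constructor
  · intro h i j k l
    exact (forall_map_le_iff_le_ker_of_range_le_radsub (hIdem i) _ _).mpr (h ⟨i, j⟩ ⟨k, l⟩)
  · rintro h ⟨i, j⟩ ⟨k, l⟩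
    exact (forall_map_le_iff_le_ker_of_range_le_radsub (hIdem i) _ _).mp (h i j k l)

/-- The `Hom`-dimension condition is equivalent to invariance of the `C_{ij}`. -/
theorem hom_dim_eq_iff_invariant
    (K : Type) [Field K] [IsAlgClosed K]
    (Λ : Type) [Ring Λ] [Algebra K Λ] [FiniteDimensional K Λ]
    (n : ℕ) (e : Fin n → Λ)
    (hIdem : ∀ i, IsIdempotentElem (e i))
    (hOrth : ∀ i j, i ≠ j → e i * e j = 0)
    (hSum : ∑ i, e i = 1)
    (hPrim : ∀ i, ∀ f : Λ, IsIdempotentElem f → f * e i = f → e i * f = f →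
      f = 0 ∨ f = e i)
    (hBasic : ∀ i j, i ≠ j → IsEmpty (↥(Pe Λ (e i)) ≃ₗ[Λ] ↥(Pe Λ (e j))))
    (t : Fin n → ℕ) (C : ∀ i : Fin n, Fin (t i) → Submodule Λ Λ)
    (hC : ∀ i j, C i j ≤ Je Λ (e i))
    (hord : ∀ i, ∀ j j' : Fin (t i), C i j ≤ C i j' ∨ C i j' ≤ C i j)
    -- `M = ⊕_{i,j} Λe_i/C_{ij}`
    (M : Type) [AddCommGroup M] [Module K M] [Module Λ M] [IsScalarTower K Λ M]
    [SMulCommClass Λ K M] [FiniteDimensional K M]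
    (hM : Nonempty (M ≃ₗ[Λ] ⨁ (p : Σ i : Fin n, Fin (t i)),
      (↥(Pe Λ (e p.1)) ⧸ Submodule.comap (Pe Λ (e p.1)).subtype (C p.1 p.2))))
    -- `P = ⊕_i (Λe_i)^{t_i}`, a projective cover of `M`
    (P : Type) [AddCommGroup P] [Module Λ P]
    (hP : Nonempty (P ≃ₗ[Λ] ⨁ (p : Σ i : Fin n, Fin (t i)), ↥(Pe Λ (e p.1)))) :
    Module.finrank K ↥(homInto K Λ P M (radsub Λ M)) =
        Module.finrank K ↥(homInto K Λ M M (radsub Λ M)) ↔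
      (∀ i j k l, ∀ f : ↥(Pe Λ (e i)) →ₗ[Λ] ↥(Je Λ (e k)),
        Submodule.map (Je Λ (e k)).subtype
          (Submodule.map f (Submodule.comap (Pe Λ (e i)).subtype (C i j))) ≤ C k l) :=
  hom_dim_eq_iff_invariant_general K Λ n e hIdem t C M hM P hP
end

section
/- Let P = ⊕_{i=1}^n P_i with P_i = (Λe_i)^{t_i}, and let C = ⊕_{i=1}^n 𝐂_i where each 𝐂_i ⊆ JP_i is a submodule. Then the following are equivalent: (i) for every Λ-automorphism g of P, g(C) = ⊕_{i=1}^n (g(C) ∩ P_i); (ii) for every Λ-automorphism g of P there exist Λ-automorphisms f_i of P_i (1 ≤ i ≤ n) with g(C) = ⊕_{i=1}^n f_i(𝐂_i); (iii) f(𝐂_i) ⊆ 𝐂_k whenever i ≠ k and f : P_i → P_k is a Λ-homomorphism. -/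
open Submodule

/-!
(ii) ⇒ (i) is formal, since `⊕ f_i(C_i)` meets each `P_i` in its own summand. For (i) ⇒ (iii),
apply (i) to the transvection `1 + ι_k ∘ f ∘ π_i` of `P`: it fixes `P_k` and sends `c ∈ C_i`
to `c + f(c)`, so (i) puts `f(c) ∈ P_k` into `g(C)` and hence into `C_k`.

For (iii) ⇒ (ii) the point is that every homomorphism `P_i → P_k` with `i ≠ k` lands in
`J P_k`. Indeed `Λe_i` is indecomposable of finite length, so by Fitting's lemma every composite
`Λe_i → Λe_k → Λe_i` is invertible or nilpotent; invertibility would split `Λe_i` off `Λe_k`,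
so it is nilpotent, and that puts the image of `e_i` in `J`. By Nakayama the diagonal blocks
`g_kk` of an automorphism `g` of `P` are then automorphisms, and `f_k := g_kk` works: with
`δ = diag(g_kk)`, the automorphism `δ⁻¹ g` has identity diagonal blocks, so (iii) makes it map
`C` into, hence onto, `C`.
-/

namespace Module

variable (R M : Type*) [Ring R] [AddCommGroup M] [Module R M]

def IsIndecomposable : Prop :=
  ∀ p : Module.End R M, IsIdempotentElem p → p = 0 ∨ p = 1

variable {R M} {N : Type*} [AddCommGroup N] [Module R N]

/-- Fitting's lemma. -/
theorem IsIndecomposable.isNilpotent_or_bijective [IsArtinian R M] [IsNoetherian R M]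
    (hM : IsIndecomposable R M) (g : Module.End R M) :
    IsNilpotent g ∨ Function.Bijective g := by
  obtain ⟨n, hn⟩ := Filter.eventually_atTop.mp g.eventually_isCompl_ker_pow_range_pow
  have hcompl := hn (n + 1) n.le_succ
  rcases hM _ (Submodule.isIdempotentElem_projection hcompl) with h | h
  · right
    refine IsArtinian.bijective_of_injective_endomorphism g ?_
    have hinj : Function.Injective (g ^ (n + 1)) := by
      rw [← LinearMap.ker_eq_bot, ← Submodule.range_projection hcompl, h, LinearMap.range_zero]
    rw [pow_succ, Module.End.coe_mul] at hinj
    exact hinj.of_comp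
  · left
    refine ⟨n + 1, LinearMap.range_eq_bot.mp ?_⟩
    rw [← Submodule.ker_projection hcompl, h, Module.End.one_eq_id, LinearMap.ker_id]

/-- If `ψ ∘ φ` is not nilpotent, Fitting's lemma makes it invertible, and then
`φ ∘ (ψ ∘ φ)⁻¹ ∘ ψ` is an idempotent of `N` with image `φ(M)`. -/
theorem IsIndecomposable.isNilpotent_comp [IsArtinian R M] [IsNoetherian R M]
    (hM : IsIndecomposable R M) (hN : IsIndecomposable R N) (hMN : IsEmpty (M ≃ₗ[R] N))
    (φ : M →ₗ[R] N) (ψ : N →ₗ[R] M) : IsNilpotent (ψ ∘ₗ φ) := by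
  rcases hM.isNilpotent_or_bijective (ψ ∘ₗ φ) with hnil | hbij
  · exact hnil
  set σ := (LinearEquiv.ofBijective _ hbij).symm
  have hσ : ∀ m, ψ (φ (σ m)) = m := (LinearEquiv.ofBijective _ hbij).apply_symm_apply
  have hσ' : ∀ m, σ (ψ (φ m)) = m := (LinearEquiv.ofBijective _ hbij).symm_apply_apply
  set p : Module.End R N := φ ∘ₗ σ.toLinearMap ∘ₗ ψ
  have hp : IsIdempotentElem p := LinearMap.ext fun x => by
    simp only [p, Module.End.mul_apply, LinearMap.comp_apply, LinearEquiv.coe_coe, hσ]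
  rcases hN p hp with h | h
  · refine ⟨1, LinearMap.ext fun m => ?_⟩
    simpa [p, hσ'] using congr(ψ ($h (φ m)))
  · refine (hMN.false (LinearEquiv.ofBijective φ ⟨?_, fun y => ⟨σ (ψ y), ?_⟩⟩)).elim
    · exact fun a b hab => hbij.1 (by simp [hab])
    · simpa [p] using congr($h y)

end Module

theorem Ring.mem_jacobson_of_forall_isNilpotent_mul {R : Type*} [Ring R] {x : R}
    (h : ∀ z, IsNilpotent (z * x)) : x ∈ Ring.jacobson R := by
  rw [← Ideal.jacobson_bot, Ideal.mem_jacobson_iff]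
  intro z
  obtain ⟨u, hu⟩ := (h z).isUnit_one_add
  refine ⟨↑u⁻¹, ?_⟩
  rw [Ideal.mem_bot, mul_assoc, ← mul_add_one, add_comm, ← hu, Units.inv_mul, sub_self]

namespace Pe

variable {Λ : Type} [Ring Λ] {e f : Λ}

theorem mem_iff (he : IsIdempotentElem e) {x : Λ} : x ∈ Pe Λ e ↔ x * e = x := by
  refine ⟨fun hx => ?_, fun hx => hx ▸ Submodule.smul_mem _ x (mem_span_singleton_self e)⟩
  obtain ⟨a, rfl⟩ := mem_span_singleton.mp hx
  rw [smul_eq_mul, mul_assoc, he.eq]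

def gen (e : Λ) : Pe Λ e := ⟨e, mem_span_singleton_self e⟩

theorem coe_smul_gen (he : IsIdempotentElem e) (x : Pe Λ e) : (x : Λ) • gen e = x :=
  Subtype.ext ((mem_iff he).mp x.2)

theorem map_apply (he : IsIdempotentElem e) {M : Type*} [AddCommGroup M] [Module Λ M]
    (φ : Pe Λ e →ₗ[Λ] M) (x : Pe Λ e) : φ x = (x : Λ) • φ (gen e) := by
  rw [← map_smul, coe_smul_gen he]

theorem isIndecomposable (he : IsIdempotentElem e)
    (hprim : ∀ f : Λ, IsIdempotentElem f → f * e = f → e * f = f → f = 0 ∨ f = e) :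
    Module.IsIndecomposable Λ (Pe Λ e) := by
  intro p hp
  set u : Λ := (p (gen e) : Λ)
  have hu : IsIdempotentElem u := by
    have := congr((($hp.eq (gen e) : Pe Λ e) : Λ))
    rwa [Module.End.mul_apply, map_apply he p (p _)] at this
  have hue : u * e = u := (mem_iff he).mp (p _).2
  have heu : e * u = u := by
    have := congr(((p $(coe_smul_gen he (gen e)) : Pe Λ e) : Λ))
    rwa [map_smul] at this
  rcases hprim u hu hue heu with h | h
  · left
    ext x
    rw [map_apply he, show p (gen e) = 0 from Subtype.ext h, smul_zero]
    rfl
  · right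
    ext x
    rw [map_apply he, show p (gen e) = gen e from Subtype.ext h, coe_smul_gen he]
    rfl

theorem coe_apply_mem_jacobson (he : IsIdempotentElem e) (φ : Pe Λ e →ₗ[Λ] Pe Λ f)
    (hφ : ∀ ψ : Pe Λ f →ₗ[Λ] Pe Λ e, IsNilpotent (ψ ∘ₗ φ)) (x : Pe Λ e) :
    (φ x : Λ) ∈ Ring.jacobson Λ := by
  set y : Λ := (φ (gen e) : Λ)
  have hφ_apply (w : Pe Λ e) : (φ w : Λ) = w * y := congr_arg Subtype.val (map_apply he φ w)
  have hey : e * y = y := (hφ_apply (gen e)).symm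
  rw [hφ_apply]
  refine Ideal.mul_mem_left _ _ (Ring.mem_jacobson_of_forall_isNilpotent_mul fun z => ?_)
  -- right multiplication by `z * e`
  let ψ : Pe Λ f →ₗ[Λ] Pe Λ e :=
    LinearMap.toSpanSingleton Λ _ ((z : Λ) • gen e) ∘ₗ (Pe Λ f).subtype
  have hpow (k : ℕ) : (((ψ ∘ₗ φ) ^ k) (gen e) : Λ) = e * (y * (z * e)) ^ k := by
    induction k with
    | zero => simp [gen]
    | succ k ih =>
      rw [pow_succ', Module.End.mul_apply, pow_succ, ← mul_assoc, ← ih]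
      simp [ψ, hφ_apply, gen, mul_assoc]
  obtain ⟨N, hN⟩ := hφ ψ
  have hzero : e * (y * (z * e)) ^ N = 0 := by
    rw [← hpow, hN]
    rfl
  refine ⟨N + 1, ?_⟩
  calc (z * y) ^ (N + 1) = z * e * (y * (z * e)) ^ N * y := by
        rw [show z * y = z * e * y by rw [mul_assoc, hey], pow_succ, ← mul_assoc, mul_pow_mul]
    _ = z * (e * (y * (z * e)) ^ N) * y := by simp only [mul_assoc]
    _ = 0 := by rw [hzero, mul_zero, zero_mul]

theorem range_le_jacobson_smul_top [IsArtinianRing Λ] (he : IsIdempotentElem e)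
    (hf : IsIdempotentElem f)
    (hprim_e : ∀ g : Λ, IsIdempotentElem g → g * e = g → e * g = g → g = 0 ∨ g = e)
    (hprim_f : ∀ g : Λ, IsIdempotentElem g → g * f = g → f * g = g → g = 0 ∨ g = f)
    (hef : IsEmpty (Pe Λ e ≃ₗ[Λ] Pe Λ f)) (φ : Pe Λ e →ₗ[Λ] Pe Λ f) :
    LinearMap.range φ ≤ Ring.jacobson Λ • ⊤ := by
  rintro _ ⟨x, rfl⟩
  rw [← coe_smul_gen hf (φ x)]
  refine Submodule.smul_mem_smul (coe_apply_mem_jacobson he φ (fun ψ => ?_) x) trivial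
  exact (isIndecomposable he hprim_e).isNilpotent_comp (isIndecomposable hf hprim_f) hef φ ψ

end Pe

theorem LinearMap.range_le_smul_top_pi {R M N ι κ : Type*} [Ring R] [AddCommGroup M] [Module R M]
    [AddCommGroup N] [Module R N] [Fintype ι] [DecidableEq ι] [Fintype κ] [DecidableEq κ]
    {I : Ideal R} (h : ∀ φ : M →ₗ[R] N, range φ ≤ I • ⊤) (Φ : (ι → M) →ₗ[R] (κ → N)) :
    range Φ ≤ I • ⊤ := by
  rintro _ ⟨v, rfl⟩
  rw [← Finset.univ_sum_single v, map_sum]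
  refine Submodule.sum_mem _ fun a _ => ?_
  rw [← Finset.univ_sum_single (Φ _)]
  refine Submodule.sum_mem _ fun b _ => ?_
  have hmem : Φ (Pi.single a (v a)) b ∈ I • (⊤ : Submodule R N) :=
    h (proj b ∘ₗ Φ ∘ₗ single R (fun _ => M) a) ⟨v a, rfl⟩
  have := Submodule.mem_map_of_mem (f := single R (fun _ => N) b) hmem
  rw [Submodule.map_smul''] at this
  exact smul_mono_right I (le_top : map (single R (fun _ => N) b) ⊤ ≤ ⊤) this

theorem Submodule.eq_top_of_sup_jacobson_smul_eq_top {R M : Type*} [Ring R] [AddCommGroup M]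
    [Module R M] [Module.Finite R M] {N : Submodule R M} (h : N ⊔ Ring.jacobson R • ⊤ = ⊤) :
    N = ⊤ := by
  refine (eq_top_or_exists_le_coatom N).resolve_right fun ⟨m, hm, hNm⟩ => hm.1 ?_
  rw [eq_top_iff, ← h]
  exact sup_le hNm ((Ring.jacobson_smul_top_le R M).trans (sInf_le hm))

theorem Submodule.map_eq_self_of_injective {R M : Type*} [Ring R] [AddCommGroup M] [Module R M]
    [IsArtinian R M] {f : M →ₗ[R] M} (hf : Function.Injective f) {p : Submodule R M}
    (hp : map f p ≤ p) : map f p = p := by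
  refine le_antisymm hp fun y hy => ?_
  set f' := f.restrict fun x hx => hp (mem_map_of_mem hx)
  obtain ⟨x, hx⟩ := IsArtinian.surjective_of_injective_endomorphism f'
    (fun a b hab => Subtype.ext (hf congr(($hab : M)))) ⟨y, hy⟩
  exact ⟨x, x.2, congr(($hx : M))⟩

section PiBlocks

variable {R : Type*} [Ring R] {ι : Type*} {M : ι → Type*} [∀ i, AddCommGroup (M i)]
  [∀ i, Module R (M i)]

theorem Submodule.map_piCongrRight_pi {M' : ι → Type*} [∀ i, AddCommGroup (M' i)]
    [∀ i, Module R (M' i)] (f : ∀ i, M i ≃ₗ[R] M' i) (C : ∀ i, Submodule R (M i)) :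
    map (LinearEquiv.piCongrRight f : (Π i, M i) →ₗ[R] Π i, M' i) (pi Set.univ C) =
      pi Set.univ fun i => map (f i : M i →ₗ[R] M' i) (C i) := by
  ext y
  simp [map_equiv_eq_comap_symm]

variable [DecidableEq ι]

def LinearMap.piBlock (g : Module.End R (Π i, M i)) (k j : ι) : M j →ₗ[R] M k :=
  proj k ∘ₗ g ∘ₗ single R M j

variable [Fintype ι]

theorem LinearMap.apply_eq_sum_piBlock (g : Module.End R (Π i, M i)) (x : Π i, M i) (k : ι) :
    g x k = ∑ j, g.piBlock k j (x j) := by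
  conv_lhs => rw [← Finset.univ_sum_single x]
  simp [piBlock]

theorem LinearMap.bijective_piBlock_self [∀ i, IsNoetherian R (M i)]
    (hoff : ∀ i k, i ≠ k → ∀ φ : M i →ₗ[R] M k, range φ ≤ Ring.jacobson R • ⊤)
    (g : (Π i, M i) ≃ₗ[R] Π i, M i) (k : ι) :
    Function.Bijective ((g : Module.End R (Π i, M i)).piBlock k k) := by
  have hsurj : Function.Surjective ((g : Module.End R (Π i, M i)).piBlock k k) := by
    refine range_eq_top.mp (Submodule.eq_top_of_sup_jacobson_smul_eq_top
      (eq_top_iff.mpr fun y _ => ?_))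
    obtain ⟨x, hx⟩ := g.surjective (Pi.single k y)
    have hy : y = g.toLinearMap.piBlock k k (x k) +
        ∑ j ∈ Finset.univ.erase k, g.toLinearMap.piBlock k j (x j) := by
      rw [Finset.add_sum_erase _ (fun j => g.toLinearMap.piBlock k j (x j)) (Finset.mem_univ k),
        ← apply_eq_sum_piBlock, LinearEquiv.coe_coe, hx, Pi.single_eq_same]
    rw [hy]
    refine Submodule.add_mem_sup (mem_range_self _ _) (Submodule.sum_mem _ fun j hj => ?_)
    exact hoff j k (Finset.ne_of_mem_erase hj) _ (mem_range_self _ _)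
  exact ⟨IsNoetherian.injective_of_surjective_endomorphism _ hsurj, hsurj⟩

theorem Submodule.eq_iSup_inf_range_single_iff (Q : Submodule R (Π i, M i)) :
    Q = ⨆ i, Q ⊓ LinearMap.range (LinearMap.single R M i) ↔
      ∀ x ∈ Q, ∀ j, Pi.single j (x j) ∈ Q := by
  refine ⟨fun hQ x hx j => ?_, fun h => le_antisymm (fun x hx => ?_) (iSup_le fun _ => inf_le_left)⟩
  · have hle : ⨆ i, Q ⊓ LinearMap.range (LinearMap.single R M i) ≤
        comap (LinearMap.single R M j ∘ₗ LinearMap.proj j) Q := by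
      refine iSup_le fun i => ?_
      rintro _ ⟨hq, v, rfl⟩
      by_cases hij : i = j
      · subst hij
        simpa using hq
      · simp [Pi.single_eq_of_ne' hij]
    exact hle (hQ.le hx)
  · rw [← Finset.univ_sum_single x]
    exact sum_mem fun j _ => mem_iSup_of_mem j ⟨h x hx j, LinearMap.mem_range_self _ _⟩

theorem Submodule.pi_eq_iSup_inf_range_single (C : ∀ i, Submodule R (M i)) :
    pi Set.univ C = ⨆ i, pi Set.univ C ⊓ LinearMap.range (LinearMap.single R M i) :=
  (eq_iSup_inf_range_single_iff _).mpr fun _ hx j => le_comap_single_pi C (hx j trivial)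

theorem Submodule.exists_map_pi_eq_pi_map [∀ i, IsArtinian R (M i)]
    {C : ∀ i, Submodule R (M i)} (hC : ∀ i k, i ≠ k → ∀ φ : M i →ₗ[R] M k, map φ (C i) ≤ C k)
    (g : (Π i, M i) ≃ₗ[R] Π i, M i)
    (hg : ∀ k, Function.Bijective ((g : Module.End R (Π i, M i)).piBlock k k)) :
    ∃ f : ∀ i, M i ≃ₗ[R] M i, map (g : (Π i, M i) →ₗ[R] Π i, M i) (pi Set.univ C) =
      pi Set.univ fun i => map (f i : M i →ₗ[R] M i) (C i) := by
  set f : ∀ i, M i ≃ₗ[R] M i := fun k => LinearEquiv.ofBijective _ (hg k)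
  set δ := LinearEquiv.piCongrRight f
  -- `δ⁻¹ ∘ g` has identity diagonal blocks, so `hC` makes it preserve `pi C`
  set g₀ := g.trans δ.symm
  have hg₀ : map (g₀ : (Π i, M i) →ₗ[R] Π i, M i) (pi Set.univ C) ≤ pi Set.univ C := by
    rintro _ ⟨x, hx, rfl⟩ k -
    change (f k).symm (g x k) ∈ C k
    rw [← LinearEquiv.coe_coe g, LinearMap.apply_eq_sum_piBlock, map_sum]
    refine sum_mem fun j _ => ?_
    by_cases hjk : j = k
    · subst hjk
      simpa [f] using hx j trivial
    · exact hC j k hjk ((f k).symm.toLinearMap ∘ₗ _) (mem_map_of_mem (hx j trivial))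
  refine ⟨f, ?_⟩
  have hg : (g : (Π i, M i) →ₗ[R] Π i, M i) = δ.toLinearMap ∘ₗ g₀.toLinearMap := by
    ext x
    simp [g₀]
  rw [hg, map_comp, map_eq_self_of_injective g₀.injective hg₀]
  exact map_piCongrRight_pi f C

theorem Submodule.forall_map_le_of_forall_eq_iSup {C : ∀ i, Submodule R (M i)}
    (hsplit : ∀ g : (Π i, M i) ≃ₗ[R] Π i, M i,
      map (g : (Π i, M i) →ₗ[R] Π i, M i) (pi Set.univ C) =
        ⨆ i, map (g : (Π i, M i) →ₗ[R] Π i, M i) (pi Set.univ C) ⊓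
          LinearMap.range (LinearMap.single R M i)) :
    ∀ i k, i ≠ k → ∀ φ : M i →ₗ[R] M k, map φ (C i) ≤ C k := by
  intro i k hik φ
  rintro _ ⟨c, hc, rfl⟩
  set N : Module.End R (Π i, M i) := LinearMap.single R M k ∘ₗ φ ∘ₗ LinearMap.proj i
  have hN_single (m : M k) : N (Pi.single k m) = 0 := by simp [N, Pi.single_eq_of_ne hik]
  have hN : IsNilpotent N := ⟨2, LinearMap.ext fun x => by
    rw [pow_two, Module.End.mul_apply, LinearMap.zero_apply]
    exact hN_single _⟩
  set τ := LinearEquiv.ofBijective (1 + N) ((Module.End.isUnit_iff _).mp hN.isUnit_one_add)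
  have hτ (x : Π i, M i) : τ x = x + N x := rfl
  have hτc : τ (Pi.single i c) k = φ c := by
    simp [hτ, N, Pi.single_eq_of_ne hik.symm]
  obtain ⟨z, hz, hτz⟩ := (eq_iSup_inf_range_single_iff _).mp (hsplit τ) _
      (mem_map_of_mem (le_comap_single_pi C hc)) k
  rw [LinearEquiv.coe_coe, LinearMap.single_apply, hτc] at hτz
  have hz_eq : z = Pi.single k (φ c) := τ.injective (by rw [hτz, hτ, hN_single, add_zero])
  simpa [hz_eq] using hz k trivial

end PiBlocks

theorem auto_image_decomposes_iff_general
    (K : Type) [Field K]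
    (Λ : Type) [Ring Λ] [Algebra K Λ] [FiniteDimensional K Λ]
    (n : ℕ) (e : Fin n → Λ)
    (hIdem : ∀ i, IsIdempotentElem (e i))
    (hPrim : ∀ i, ∀ f : Λ, IsIdempotentElem f → f * e i = f → e i * f = f →
      f = 0 ∨ f = e i)
    (hBasic : ∀ i j, i ≠ j → IsEmpty (↥(Pe Λ (e i)) ≃ₗ[Λ] ↥(Pe Λ (e j))))
    (t : Fin n → ℕ)
    (CC : ∀ i : Fin n, Submodule Λ (Fin (t i) → ↥(Pe Λ (e i)))) :
    -- (i) the image of `C` under any automorphism of `P` is the direct sum of its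
    -- intersections with the canonical summands `P_i`
    ((∀ g : (∀ i : Fin n, Fin (t i) → ↥(Pe Λ (e i))) ≃ₗ[Λ]
          (∀ i : Fin n, Fin (t i) → ↥(Pe Λ (e i))),
        Submodule.map (g : (∀ i : Fin n, Fin (t i) → ↥(Pe Λ (e i))) →ₗ[Λ] _)
            (Submodule.pi Set.univ CC) =
          ⨆ i : Fin n,
            (Submodule.map (g : (∀ i : Fin n, Fin (t i) → ↥(Pe Λ (e i))) →ₗ[Λ] _)
                (Submodule.pi Set.univ CC) ⊓
              LinearMap.range
                (LinearMap.single Λ (fun i : Fin n => Fin (t i) → ↥(Pe Λ (e i))) i))) ↔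
      -- (ii) the image of `C` under any automorphism of `P` is `⊕ f_i(C_i)` for suitable
      -- automorphisms `f_i` of `P_i`
      (∀ g : (∀ i : Fin n, Fin (t i) → ↥(Pe Λ (e i))) ≃ₗ[Λ]
          (∀ i : Fin n, Fin (t i) → ↥(Pe Λ (e i))),
        ∃ f : ∀ i : Fin n, (Fin (t i) → ↥(Pe Λ (e i))) ≃ₗ[Λ] (Fin (t i) → ↥(Pe Λ (e i))),
          Submodule.map (g : (∀ i : Fin n, Fin (t i) → ↥(Pe Λ (e i))) →ₗ[Λ] _)
              (Submodule.pi Set.univ CC) =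
            Submodule.pi Set.univ (fun i => Submodule.map
              ((f i : (Fin (t i) → ↥(Pe Λ (e i))) →ₗ[Λ] (Fin (t i) → ↥(Pe Λ (e i)))))
              (CC i)))) ∧
    ((∀ g : (∀ i : Fin n, Fin (t i) → ↥(Pe Λ (e i))) ≃ₗ[Λ]
          (∀ i : Fin n, Fin (t i) → ↥(Pe Λ (e i))),
        Submodule.map (g : (∀ i : Fin n, Fin (t i) → ↥(Pe Λ (e i))) →ₗ[Λ] _)
            (Submodule.pi Set.univ CC) =
          ⨆ i : Fin n,
            (Submodule.map (g : (∀ i : Fin n, Fin (t i) → ↥(Pe Λ (e i))) →ₗ[Λ] _)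
                (Submodule.pi Set.univ CC) ⊓
              LinearMap.range
                (LinearMap.single Λ (fun i : Fin n => Fin (t i) → ↥(Pe Λ (e i))) i))) ↔
      -- (iii)
      (∀ i k : Fin n, i ≠ k →
        ∀ f : (Fin (t i) → ↥(Pe Λ (e i))) →ₗ[Λ] (Fin (t k) → ↥(Pe Λ (e k))),
          Submodule.map f (CC i) ≤ CC k)) := by
  have := IsArtinianRing.of_finite K Λ
  have hoff : ∀ i k : Fin n, i ≠ k →
      ∀ φ : (Fin (t i) → ↥(Pe Λ (e i))) →ₗ[Λ] (Fin (t k) → ↥(Pe Λ (e k))),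
        LinearMap.range φ ≤ Ring.jacobson Λ • ⊤ := fun i k hik =>
    LinearMap.range_le_smul_top_pi
      (Pe.range_le_jacobson_smul_top (hIdem i) (hIdem k) (hPrim i) (hPrim k) (hBasic i k hik))
  have h13 := Submodule.forall_map_le_of_forall_eq_iSup (C := CC)
  have h32 := fun hiii g => Submodule.exists_map_pi_eq_pi_map (C := CC) hiii g
    (LinearMap.bijective_piBlock_self hoff g)
  refine ⟨⟨fun hi g => h32 (h13 hi) g, fun hii g => ?_⟩, ⟨h13, fun hiii g => ?_⟩⟩
  · obtain ⟨f, hf⟩ := hii g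
    rw [hf]
    exact Submodule.pi_eq_iSup_inf_range_single _
  · obtain ⟨f, hf⟩ := h32 hiii g
    rw [hf]
    exact Submodule.pi_eq_iSup_inf_range_single _

/-- Lemma 3.7: decomposition behaviour of `C = ⊕ C_i` under automorphisms of
`P = ⊕ P_i`, `P_i = (Λe_i)^{t_i}`. -/
theorem auto_image_decomposes_iff
    (K : Type) [Field K] [IsAlgClosed K]
    (Λ : Type) [Ring Λ] [Algebra K Λ] [FiniteDimensional K Λ]
    (n : ℕ) (e : Fin n → Λ)
    (hIdem : ∀ i, IsIdempotentElem (e i))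
    (hOrth : ∀ i j, i ≠ j → e i * e j = 0)
    (hSum : ∑ i, e i = 1)
    (hPrim : ∀ i, ∀ f : Λ, IsIdempotentElem f → f * e i = f → e i * f = f →
      f = 0 ∨ f = e i)
    (hBasic : ∀ i j, i ≠ j → IsEmpty (↥(Pe Λ (e i)) ≃ₗ[Λ] ↥(Pe Λ (e j))))
    (t : Fin n → ℕ)
    (CC : ∀ i : Fin n, Submodule Λ (Fin (t i) → ↥(Pe Λ (e i))))
    (hCC : ∀ i, CC i ≤ radsub Λ (Fin (t i) → ↥(Pe Λ (e i)))) :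
    -- (i) the image of `C` under any automorphism of `P` is the direct sum of its
    -- intersections with the canonical summands `P_i`
    ((∀ g : (∀ i : Fin n, Fin (t i) → ↥(Pe Λ (e i))) ≃ₗ[Λ]
          (∀ i : Fin n, Fin (t i) → ↥(Pe Λ (e i))),
        Submodule.map (g : (∀ i : Fin n, Fin (t i) → ↥(Pe Λ (e i))) →ₗ[Λ] _)
            (Submodule.pi Set.univ CC) =
          ⨆ i : Fin n,
            (Submodule.map (g : (∀ i : Fin n, Fin (t i) → ↥(Pe Λ (e i))) →ₗ[Λ] _)
                (Submodule.pi Set.univ CC) ⊓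
              LinearMap.range
                (LinearMap.single Λ (fun i : Fin n => Fin (t i) → ↥(Pe Λ (e i))) i))) ↔
      -- (ii) the image of `C` under any automorphism of `P` is `⊕ f_i(C_i)` for suitable
      -- automorphisms `f_i` of `P_i`
      (∀ g : (∀ i : Fin n, Fin (t i) → ↥(Pe Λ (e i))) ≃ₗ[Λ]
          (∀ i : Fin n, Fin (t i) → ↥(Pe Λ (e i))),
        ∃ f : ∀ i : Fin n, (Fin (t i) → ↥(Pe Λ (e i))) ≃ₗ[Λ] (Fin (t i) → ↥(Pe Λ (e i))),
          Submodule.map (g : (∀ i : Fin n, Fin (t i) → ↥(Pe Λ (e i))) →ₗ[Λ] _)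
              (Submodule.pi Set.univ CC) =
            Submodule.pi Set.univ (fun i => Submodule.map
              ((f i : (Fin (t i) → ↥(Pe Λ (e i))) →ₗ[Λ] (Fin (t i) → ↥(Pe Λ (e i)))))
              (CC i)))) ∧
    ((∀ g : (∀ i : Fin n, Fin (t i) → ↥(Pe Λ (e i))) ≃ₗ[Λ]
          (∀ i : Fin n, Fin (t i) → ↥(Pe Λ (e i))),
        Submodule.map (g : (∀ i : Fin n, Fin (t i) → ↥(Pe Λ (e i))) →ₗ[Λ] _)
            (Submodule.pi Set.univ CC) =
          ⨆ i : Fin n,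
            (Submodule.map (g : (∀ i : Fin n, Fin (t i) → ↥(Pe Λ (e i))) →ₗ[Λ] _)
                (Submodule.pi Set.univ CC) ⊓
              LinearMap.range
                (LinearMap.single Λ (fun i : Fin n => Fin (t i) → ↥(Pe Λ (e i))) i))) ↔
      -- (iii)
      (∀ i k : Fin n, i ≠ k →
        ∀ f : (Fin (t i) → ↥(Pe Λ (e i))) →ₗ[Λ] (Fin (t k) → ↥(Pe Λ (e k))),
          Submodule.map f (CC i) ≤ CC k)) :=
  auto_image_decomposes_iff_general K Λ n e hIdem hPrim hBasic t CC
end
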